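/- General dGL equivalence for Demon: For every hybrid game α and all sets of states X, Y ⊆ S, Demon's semi-competitive winning region decomposes into a cooperative and a competitive zero-sum dGL winning region: δ_α(X,Y) = ς_{α^{-d}}(X ∩ Y) ∪ δ_α(Y), where the regions on the right-hand side are the one-argument zero-sum dGL winning regions. -/
import Mathlib


open Set

/-- Hybrid games over a variable set `V`. Terms/ODE right-hand sides are
interpreted as functions from states `V → ℝ` to `ℝ`; tests and evolution
domain constraints are sets of states. -/
inductive Game (V : Type*) where
  | assign (x : V) (e : (V → ℝ) → ℝ)
  | ode (x : V) (f : (V → ℝ) → ℝ) (Q : Set (V → ℝ))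
  | test (Q : Set (V → ℝ))
  | choice (a b : Game V)
  | seq (a b : Game V)
  | dual (a : Game V)
  | star (a : Game V)

variable {V : Type*} [DecidableEq V]

/-- `φ : ℝ → (V → ℝ)` (restricted to `[0,r]`) is a solution of `x' = f(x) & Q`
of duration `r ≥ 0`: `t ↦ φ t x` is differentiable with derivative `f (φ s)`
at each `s ∈ [0,r]`, `φ s ∈ Q` on `[0,r]`, and all other variables stay
constant along `φ`. -/
def IsSolution (x : V) (f : (V → ℝ) → ℝ) (Q : Set (V → ℝ)) (r : ℝ)
    (φ : ℝ → (V → ℝ)) : Prop :=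
  0 ≤ r ∧
  (∀ s ∈ Set.Icc 0 r, HasDerivAt (fun t => φ t x) (f (φ s)) s) ∧
  (∀ s ∈ Set.Icc 0 r, φ s ∈ Q) ∧
  (∀ s ∈ Set.Icc 0 r, ∀ y, y ≠ x → φ s y = φ 0 y)

mutual
/-- Angel's semi-competitive winning region ς_α(X,Y). -/
def angel : Game V → Set (V → ℝ) → Set (V → ℝ) → Set (V → ℝ)
  | .assign x e, X, _ => {ω | Function.update ω x (e ω) ∈ X}
  | .ode x f Q, X, _ =>
      {ω | ∃ r φ, IsSolution x f Q r φ ∧ φ 0 = ω ∧ φ r ∈ X}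
  | .test Q, X, _ => Q ∩ X
  | .choice a b, X, Y => angel a X Y ∪ angel b X Y
  | .seq a b, X, Y => angel a (angel b X Y) (demon b X Y)
  | .dual a, X, Y => demon a Y X
  | .star a, X, Y =>
      ⋂₀ {Z | X ∪ angel a Z Zᶜ ⊆ Z} ∪
      ⋂₀ {Z | (X ∩ Y) ∪ (angel a Z Z ∩ demon a Z Z) ⊆ Z}

/-- Demon's semi-competitive winning region δ_α(X,Y). -/
def demon : Game V → Set (V → ℝ) → Set (V → ℝ) → Set (V → ℝ)
  | .assign x e, _, Y => {ω | Function.update ω x (e ω) ∈ Y}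
  | .ode x f Q, X, Y =>
      {ω | ∀ r φ, IsSolution x f Q r φ → φ 0 = ω → ∀ s ∈ Set.Icc 0 r, φ s ∈ Y} ∪
      {ω | ∃ r φ, IsSolution x f Q r φ ∧ φ 0 = ω ∧ ∃ s ∈ Set.Icc 0 r, φ s ∈ X ∩ Y}
  | .test Q, _, Y => Qᶜ ∪ Y
  | .choice a b, X, Y =>
      (demon a X Y ∩ demon b X Y) ∪ (demon a X Y ∩ angel a X Y) ∪
      (demon b X Y ∩ angel b X Y)
  | .seq a b, X, Y => demon a (angel b X Y) (demon b X Y)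
  | .dual a, X, Y => angel a Y X
  | .star a, X, Y =>
      ⋃₀ {Z | Z ⊆ Y ∩ demon a Zᶜ Z} ∪
      ⋂₀ {Z | (X ∩ Y) ∪ (angel a Z Z ∩ demon a Z Z) ⊆ Z}
end

/-- Angel's one-argument zero-sum dGL winning region ς_α(X). -/
def dglAngel : Game V → Set (V → ℝ) → Set (V → ℝ)
  | .assign x e, X => {ω | Function.update ω x (e ω) ∈ X}
  | .ode x f Q, X => {ω | ∃ r φ, IsSolution x f Q r φ ∧ φ 0 = ω ∧ φ r ∈ X}
  | .test Q, X => Q ∩ X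
  | .choice a b, X => dglAngel a X ∪ dglAngel b X
  | .seq a b, X => dglAngel a (dglAngel b X)
  | .dual a, X => (dglAngel a Xᶜ)ᶜ
  | .star a, X => ⋂₀ {Z | X ∪ dglAngel a Z ⊆ Z}

/-- Demon's one-argument zero-sum dGL winning region δ_α(X) = (ς_α(Xᶜ))ᶜ. -/
def dglDemon (g : Game V) (X : Set (V → ℝ)) : Set (V → ℝ) :=
  (dglAngel g Xᶜ)ᶜ

/-- Systematization α^{-d}: removes all dual operators. -/
def Game.sys : Game V → Game V
  | .assign x e => .assign x e
  | .ode x f Q => .ode x f Q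
  | .test Q => .test Q
  | .choice a b => .choice a.sys b.sys
  | .seq a b => .seq a.sys b.sys
  | .dual a => a.sys
  | .star a => .star a.sys

lemma dglAngel_mono (α : Game V) : ∀ ⦃X X' : Set (V → ℝ)⦄, X ⊆ X' →
    dglAngel α X ⊆ dglAngel α X' := by
  induction α with
  | assign x e => intro X X' h ω hω; exact h hω
  | ode x f Q =>
      rintro X X' h ω ⟨r, φ, hs, h0, hr⟩
      exact ⟨r, φ, hs, h0, h hr⟩
  | test Q => intro X X' h; exact inter_subset_inter_right _ h
  | choice a b iha ihb =>
      intro X X' h; exact union_subset_union (iha h) (ihb h)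
  | seq a b iha ihb => intro X X' h; exact iha (ihb h)
  | dual a iha =>
      intro X X' h
      exact compl_subset_compl.mpr (iha (compl_subset_compl.mpr h))
  | star a iha =>
      intro X X' h
      exact sInter_subset_sInter (fun Z hZ => (union_subset_union_left _ h).trans hZ)

lemma dglDemon_mono (α : Game V) {X X' : Set (V → ℝ)} (h : X ⊆ X') :
    dglDemon α X ⊆ dglDemon α X' :=
  compl_subset_compl.mpr (dglAngel_mono α (compl_subset_compl.mpr h))

lemma dglAngel_star_prefix (a : Game V) (X : Set (V → ℝ)) :
    X ∪ dglAngel a (dglAngel (.star a) X) ⊆ dglAngel (.star a) X := by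
  intro ω hω
  intro Z hZ
  rcases hω with hω | hω
  · exact hZ (Or.inl hω)
  · exact hZ (Or.inr (dglAngel_mono a (sInter_subset_of_mem hZ) hω))

lemma dglAngel_star_least (a : Game V) {X Z : Set (V → ℝ)}
    (h : X ∪ dglAngel a Z ⊆ Z) : dglAngel (.star a) X ⊆ Z :=
  sInter_subset_of_mem h

lemma dglAngel_sys_empty (α : Game V) : dglAngel α.sys (∅ : Set (V → ℝ)) = ∅ := by
  induction α with
  | assign x e => rfl
  | ode x f Q =>
      ext ω; simp [Game.sys, dglAngel]
  | test Q => simp [Game.sys, dglAngel]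
  | choice a b iha ihb => simp [Game.sys, dglAngel, iha, ihb]
  | seq a b iha ihb => simp [Game.sys, dglAngel, iha, ihb]
  | dual a iha => simpa [Game.sys] using iha
  | star a iha =>
      apply subset_empty_iff.mp
      apply dglAngel_star_least
      simp [iha]

/-- Consensus lemma: zero-sum Angel for X and zero-sum Demon for Y combine
into cooperative achievement of X ∩ Y in the systematized game. -/
lemma consensus (α : Game V) : ∀ X Y : Set (V → ℝ),
    dglAngel α X ∩ dglDemon α Y ⊆ dglAngel α.sys (X ∩ Y) := by
  induction α with
  | assign x e =>
      intro X Y ω ⟨hX, hY⟩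
      have hY' : Function.update ω x (e ω) ∈ Y := by
        by_contra h; exact hY h
      exact ⟨hX, hY'⟩
  | ode x f Q =>
      rintro X Y ω ⟨⟨r, φ, hs, h0, hr⟩, hY⟩
      refine ⟨r, φ, hs, h0, hr, ?_⟩
      by_contra h
      exact hY ⟨r, φ, hs, h0, h⟩
  | test Q =>
      rintro X Y ω ⟨⟨hQ, hX⟩, hY⟩
      refine ⟨hQ, hX, ?_⟩
      by_contra h
      exact hY ⟨hQ, h⟩
  | choice a b iha ihb =>
      rintro X Y ω ⟨hX | hX, hY⟩
      · have : ω ∈ dglDemon a Y := by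
          intro h; exact hY (Or.inl h)
        exact Or.inl (iha X Y ⟨hX, this⟩)
      · have : ω ∈ dglDemon b Y := by
          intro h; exact hY (Or.inr h)
        exact Or.inr (ihb X Y ⟨hX, this⟩)
  | seq a b iha ihb =>
      intro X Y ω ⟨hX, hY⟩
      have hY' : ω ∈ dglDemon a (dglDemon b Y) := by
        simpa [dglDemon, dglAngel, compl_compl] using hY
      have := iha (dglAngel b X) (dglDemon b Y) ⟨hX, hY'⟩
      exact dglAngel_mono a.sys (fun ω' hω' => ihb X Y hω') this
  | dual a iha =>
      intro X Y ω ⟨hX, hY⟩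
      have hX' : ω ∈ dglDemon a X := hX
      have hY' : ω ∈ dglAngel a Y := by
        simpa [dglDemon, dglAngel, compl_compl] using hY
      have := iha Y X ⟨hY', hX'⟩
      simpa [Game.sys, inter_comm] using this
  | star a iha =>
      intro X Y ω ⟨hX, hY⟩
      classical
      set W : Set (V → ℝ) := (dglAngel (.star a) Yᶜ)ᶜ with hWdef
      set L : Set (V → ℝ) := dglAngel (.star a.sys) (X ∩ Y) with hLdef
      have hWY : W ⊆ Y := by
        intro ω' hω'
        by_contra h
        exact hω' (fun Z hZ => hZ (Or.inl h))
      have hWd : W ⊆ dglDemon a W := by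
        have hpre := dglAngel_star_prefix a Yᶜ
        intro ω' hω'
        intro hmem
        exact hω' (hpre (Or.inr (dglAngel_mono a (by simp [hWdef]) hmem)))
      have hLpre : (X ∩ Y) ∪ dglAngel a.sys L ⊆ L := dglAngel_star_prefix a.sys (X ∩ Y)
      have key : dglAngel (.star a) X ⊆ Wᶜ ∪ L := by
        apply dglAngel_star_least
        rintro ω' (hω' | hω')
        · by_cases hw : ω' ∈ W
          · exact Or.inr (hLpre (Or.inl ⟨hω', hWY hw⟩))
          · exact Or.inl hw
        · by_cases hw : ω' ∈ W
          · refine Or.inr (hLpre (Or.inr ?_))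
            have := iha (Wᶜ ∪ L) W ⟨hω', hWd hw⟩
            exact dglAngel_mono a.sys (by intro z hz; rcases hz with ⟨hz1 | hz1, hz2⟩; exact absurd hz2 hz1; exact hz1) this
          · exact Or.inl hw
      rcases key hX with h | h
      · exact absurd hY h
      · exact h

/-- Distribution lemma. -/
lemma distribute (α : Game V) : ∀ P W : Set (V → ℝ),
    dglAngel α (P ∪ W) ⊆ dglAngel α.sys P ∪ dglAngel α W := by
  induction α with
  | assign x e => intro P W ω hω; exact hω
  | ode x f Q =>
      rintro P W ω ⟨r, φ, hs, h0, hr | hr⟩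
      · exact Or.inl ⟨r, φ, hs, h0, hr⟩
      · exact Or.inr ⟨r, φ, hs, h0, hr⟩
  | test Q =>
      rintro P W ω ⟨hQ, hP | hW⟩
      · exact Or.inl ⟨hQ, hP⟩
      · exact Or.inr ⟨hQ, hW⟩
  | choice a b iha ihb =>
      rintro P W ω (h | h)
      · rcases iha P W h with h' | h'
        · exact Or.inl (Or.inl h')
        · exact Or.inr (Or.inl h')
      · rcases ihb P W h with h' | h'
        · exact Or.inl (Or.inr h')
        · exact Or.inr (Or.inr h')
  | seq a b iha ihb =>
      intro P W ω hω
      have h1 : ω ∈ dglAngel a (dglAngel b.sys P ∪ dglAngel b W) :=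
        dglAngel_mono a (ihb P W) hω
      exact iha (dglAngel b.sys P) (dglAngel b W) h1
  | dual a iha =>
      intro P W ω hω
      by_cases hP : ω ∈ dglAngel a.sys P
      · exact Or.inl hP
      right
      intro hc
      apply hω
      have : ω ∈ dglAngel a ((Wᶜ ∩ P) ∪ (Wᶜ ∩ Pᶜ)) := by
        refine dglAngel_mono a ?_ hc
        intro z hz
        by_cases hp : z ∈ P
        · exact Or.inl ⟨hz, hp⟩
        · exact Or.inr ⟨hz, hp⟩
      rcases iha (Wᶜ ∩ P) (Wᶜ ∩ Pᶜ) this with h | h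
      · exact absurd (dglAngel_mono a.sys inter_subset_right h) hP
      · refine dglAngel_mono a ?_ h
        intro z hz
        simp only [mem_compl_iff, mem_union, not_or]
        exact ⟨hz.2, hz.1⟩
  | star a iha =>
      intro P W ω hω
      refine dglAngel_star_least a ?_ hω
      rintro ω' (hω' | hω')
      · rcases hω' with h | h
        · exact Or.inl (dglAngel_star_prefix a.sys P (Or.inl h))
        · exact Or.inr (dglAngel_star_prefix a W (Or.inl h))
      · rcases iha (dglAngel (.star a.sys) P) (dglAngel (.star a) W) hω' with h | h
        · exact Or.inl (dglAngel_star_prefix a.sys P (Or.inr h))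
        · exact Or.inr (dglAngel_star_prefix a W (Or.inr h))

lemma IsSolution.trunc {x : V} {f : (V → ℝ) → ℝ} {Q : Set (V → ℝ)} {r : ℝ}
    {φ : ℝ → (V → ℝ)} (h : IsSolution x f Q r φ) {s : ℝ}
    (hs : s ∈ Set.Icc 0 r) : IsSolution x f Q s φ := by
  obtain ⟨hr, hd, hQ, hc⟩ := h
  have hsub : Set.Icc (0:ℝ) s ⊆ Set.Icc 0 r := Set.Icc_subset_Icc_right hs.2
  exact ⟨hs.1, fun t ht => hd t (hsub ht), fun t ht => hQ t (hsub ht),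
    fun t ht => hc t (hsub ht)⟩

lemma ode_forall_eq (x : V) (f : (V → ℝ) → ℝ) (Q : Set (V → ℝ))
    (Y : Set (V → ℝ)) :
    {ω | ∀ r φ, IsSolution x f Q r φ → φ 0 = ω → ∀ s ∈ Set.Icc 0 r, φ s ∈ Y}
      = dglDemon (.ode x f Q) Y := by
  ext ω
  constructor
  · intro h
    rintro ⟨r, φ, hs, h0, hr⟩
    exact hr (h r φ hs h0 r ⟨hs.1, le_refl r⟩)
  · intro h
    intro r φ hs h0 s hsm
    by_contra hy
    exact h ⟨s, φ, hs.trunc hsm, h0, hy⟩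

lemma ode_exists_eq (x : V) (f : (V → ℝ) → ℝ) (Q : Set (V → ℝ))
    (U : Set (V → ℝ)) :
    {ω | ∃ r φ, IsSolution x f Q r φ ∧ φ 0 = ω ∧ ∃ s ∈ Set.Icc 0 r, φ s ∈ U}
      = dglAngel (.ode x f Q) U := by
  ext ω
  constructor
  · rintro ⟨r, φ, hs, h0, s, hsm, hu⟩
    exact ⟨s, φ, hs.trunc hsm, h0, hu⟩
  · rintro ⟨r, φ, hs, h0, hu⟩
    exact ⟨r, φ, hs, h0, r, ⟨hs.1, le_refl r⟩, hu⟩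

lemma dglDemon_seq (a b : Game V) (Y : Set (V → ℝ)) :
    dglDemon (.seq a b) Y = dglDemon a (dglDemon b Y) := by
  simp [dglDemon, dglAngel, compl_compl]

lemma dglDemon_dual (a : Game V) (Y : Set (V → ℝ)) :
    dglDemon (.dual a) Y = dglAngel a Y := by
  simp [dglDemon, dglAngel, compl_compl]

lemma dglDemon_choice (a b : Game V) (Y : Set (V → ℝ)) :
    dglDemon (.choice a b) Y = dglDemon a Y ∩ dglDemon b Y := by
  simp [dglDemon, dglAngel, compl_union]

lemma sUnion_eq_dglDemon_star (a : Game V) (Y : Set (V → ℝ)) :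
    ⋃₀ {Z | Z ⊆ Y ∩ dglDemon a Z} = dglDemon (.star a) Y := by
  ext ω
  constructor
  · rintro ⟨Z, hZ, hω⟩
    intro hmem
    have hZc : Zᶜ ∈ {W | Yᶜ ∪ dglAngel a W ⊆ W} := by
      rintro z (hz | hz)
      · intro hzZ; exact hz (hZ hzZ).1
      · intro hzZ; exact (hZ hzZ).2 hz
    exact hmem Zᶜ hZc hω
  · intro h
    have : ¬ ∀ W ∈ {W : Set (V → ℝ) | Yᶜ ∪ dglAngel a W ⊆ W}, ω ∈ W := h
    push_neg at this
    obtain ⟨W, hW, hωW⟩ := this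
    refine ⟨Wᶜ, ?_, hωW⟩
    intro z hz
    refine ⟨?_, ?_⟩
    · by_contra hy
      exact hz (hW (Or.inl hy))
    · intro hc
      rw [compl_compl] at hc
      exact hz (hW (Or.inr hc))

set_option maxHeartbeats 2000000 in
theorem main_both (α : Game V) :
    (∀ X Y, angel α X Y = dglAngel α.sys (X ∩ Y) ∪ dglAngel α X) ∧
    (∀ X Y, demon α X Y = dglAngel α.sys (X ∩ Y) ∪ dglDemon α Y) := by
  induction α with
  | assign x e =>
      refine ⟨fun X Y => ?_, fun X Y => ?_⟩ <;>
      · ext ω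
        simp only [angel, demon, dglAngel, dglDemon, Game.sys, mem_union,
          mem_setOf_eq, mem_inter_iff, mem_compl_iff]
        tauto
  | test Q =>
      refine ⟨fun X Y => ?_, fun X Y => ?_⟩ <;>
      · ext ω
        simp only [angel, demon, dglAngel, dglDemon, Game.sys, mem_union,
          mem_setOf_eq, mem_inter_iff, mem_compl_iff]
        tauto
  | ode x f Q =>
      refine ⟨fun X Y => ?_, fun X Y => ?_⟩
      · apply Subset.antisymm
        · intro ω h
          exact Or.inr h
        · rintro ω (h | h)
          · exact dglAngel_mono (Game.ode x f Q) inter_subset_left h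
          · exact h
      · show ({ω | ∀ r φ, IsSolution x f Q r φ → φ 0 = ω → ∀ s ∈ Set.Icc 0 r, φ s ∈ Y}
            ∪ {ω | ∃ r φ, IsSolution x f Q r φ ∧ φ 0 = ω ∧ ∃ s ∈ Set.Icc 0 r, φ s ∈ X ∩ Y}) = _
        rw [ode_forall_eq, ode_exists_eq, union_comm]
        rfl
  | choice a b iha ihb =>
      obtain ⟨ihaA, ihaD⟩ := iha
      obtain ⟨ihbA, ihbD⟩ := ihb
      refine ⟨fun X Y => ?_, fun X Y => ?_⟩
      · show angel a X Y ∪ angel b X Y = _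
        rw [ihaA, ihbA]
        show _ = (dglAngel a.sys (X ∩ Y) ∪ dglAngel b.sys (X ∩ Y)) ∪
          (dglAngel a X ∪ dglAngel b X)
        ext ω
        simp only [mem_union]
        tauto
      · show ((demon a X Y ∩ demon b X Y) ∪ (demon a X Y ∩ angel a X Y) ∪
            (demon b X Y ∩ angel b X Y)) = _
        rw [ihaA, ihaD, ihbA, ihbD, dglDemon_choice]
        show _ = (dglAngel a.sys (X ∩ Y) ∪ dglAngel b.sys (X ∩ Y)) ∪
          (dglDemon a Y ∩ dglDemon b Y)
        have hca : ∀ ω, ω ∈ dglAngel a X → ω ∈ dglDemon a Y →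
            ω ∈ dglAngel a.sys (X ∩ Y) := fun ω h1 h2 => consensus a X Y ⟨h1, h2⟩
        have hcb : ∀ ω, ω ∈ dglAngel b X → ω ∈ dglDemon b Y →
            ω ∈ dglAngel b.sys (X ∩ Y) := fun ω h1 h2 => consensus b X Y ⟨h1, h2⟩
        ext ω
        have h1 := hca ω
        have h2 := hcb ω
        simp only [mem_union, mem_inter_iff]
        tauto
  | seq a b iha ihb =>
      obtain ⟨ihaA, ihaD⟩ := iha
      obtain ⟨ihbA, ihbD⟩ := ihb
      have hcap : ∀ X Y : Set (V → ℝ),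
          angel b X Y ∩ demon b X Y = dglAngel b.sys (X ∩ Y) := by
        intro X Y
        apply Subset.antisymm
        · rintro ω ⟨h1, h2⟩
          rw [ihbA] at h1
          rw [ihbD] at h2
          rcases h1 with h1 | h1
          · exact h1
          rcases h2 with h2 | h2
          · exact h2
          exact consensus b X Y ⟨h1, h2⟩
        · intro ω h
          rw [ihbA, ihbD]
          exact ⟨Or.inl h, Or.inl h⟩
      refine ⟨fun X Y => ?_, fun X Y => ?_⟩
      · show angel a (angel b X Y) (demon b X Y) = _
        rw [ihaA, hcap]
        apply Subset.antisymm
        · rintro ω (h | h)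
          · exact Or.inl h
          · rw [ihbA] at h
            rcases distribute a _ _ h with h' | h'
            · exact Or.inl h'
            · exact Or.inr h'
        · rintro ω (h | h)
          · exact Or.inl h
          · refine Or.inr (dglAngel_mono a ?_ h)
            rw [ihbA]
            exact subset_union_right
      · show demon a (angel b X Y) (demon b X Y) = _
        rw [ihaD, hcap, ihbD, dglDemon_seq]
        apply Subset.antisymm
        · rintro ω (h | h)
          · exact Or.inl h
          · rcases distribute (.dual a) (dglAngel b.sys (X ∩ Y)) (dglDemon b Y) h with h' | h'
            · exact Or.inl h'
            · exact Or.inr h'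
        · rintro ω (h | h)
          · exact Or.inl h
          · exact Or.inr (dglDemon_mono a subset_union_right h)
  | dual a iha =>
      obtain ⟨ihaA, ihaD⟩ := iha
      refine ⟨fun X Y => ?_, fun X Y => ?_⟩
      · show demon a Y X = _
        rw [ihaD Y X, inter_comm Y X]
        rfl
      · show angel a Y X = _
        rw [ihaA Y X, inter_comm Y X, dglDemon_dual]
        rfl
  | star a iha =>
      obtain ⟨ihaA, ihaD⟩ := iha
      have h1 : ∀ Z : Set (V → ℝ), angel a Z Zᶜ = dglAngel a Z := by
        intro Z
        rw [ihaA Z Zᶜ, inter_compl_self, dglAngel_sys_empty, empty_union]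
      have h2 : ∀ Z : Set (V → ℝ), angel a Z Z ∩ demon a Z Z = dglAngel a.sys Z := by
        intro Z
        rw [ihaA Z Z, ihaD Z Z, inter_self]
        apply Subset.antisymm
        · rintro ω ⟨h1 | h1, h2 | h2⟩
          · exact h1
          · exact h1
          · exact h2
          · have := consensus a Z Z ⟨h1, h2⟩
            rwa [inter_self] at this
        · intro ω h
          exact ⟨Or.inl h, Or.inl h⟩
      have h3 : ∀ Z : Set (V → ℝ), demon a Zᶜ Z = dglDemon a Z := by
        intro Z
        rw [ihaD Zᶜ Z, compl_inter_self, dglAngel_sys_empty, empty_union]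
      refine ⟨fun X Y => ?_, fun X Y => ?_⟩
      · show (⋂₀ {Z | X ∪ angel a Z Zᶜ ⊆ Z}) ∪
            (⋂₀ {Z | (X ∩ Y) ∪ (angel a Z Z ∩ demon a Z Z) ⊆ Z}) = _
        have e1 : {Z : Set (V → ℝ) | X ∪ angel a Z Zᶜ ⊆ Z}
            = {Z | X ∪ dglAngel a Z ⊆ Z} := by
          ext Z; rw [mem_setOf_eq, mem_setOf_eq, h1]
        have e2 : {Z : Set (V → ℝ) | (X ∩ Y) ∪ (angel a Z Z ∩ demon a Z Z) ⊆ Z}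
            = {Z | (X ∩ Y) ∪ dglAngel a.sys Z ⊆ Z} := by
          ext Z; rw [mem_setOf_eq, mem_setOf_eq, h2]
        rw [e1, e2, union_comm]
        rfl
      · show (⋃₀ {Z | Z ⊆ Y ∩ demon a Zᶜ Z}) ∪
            (⋂₀ {Z | (X ∩ Y) ∪ (angel a Z Z ∩ demon a Z Z) ⊆ Z}) = _
        have e3 : {Z : Set (V → ℝ) | Z ⊆ Y ∩ demon a Zᶜ Z}
            = {Z | Z ⊆ Y ∩ dglDemon a Z} := by
          ext Z; rw [mem_setOf_eq, mem_setOf_eq, h3]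
        have e2 : {Z : Set (V → ℝ) | (X ∩ Y) ∪ (angel a Z Z ∩ demon a Z Z) ⊆ Z}
            = {Z | (X ∩ Y) ∪ dglAngel a.sys Z ⊆ Z} := by
          ext Z; rw [mem_setOf_eq, mem_setOf_eq, h2]
        rw [e3, e2, sUnion_eq_dglDemon_star, union_comm]
        rfl

/-- General dGL equivalence for Demon:
`δ_α(X,Y) = ς_{α^{-d}}(X ∩ Y) ∪ δ_α(Y)`. -/
theorem general_dGL_equivalence_demon (α : Game V) (X Y : Set (V → ℝ)) :
    demon α X Y = dglAngel α.sys (X ∩ Y) ∪ dglDemon α Y :=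
  (main_both α).2 X Y
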